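/- Let N be a finite index set, b ∈ ℕ with |N| ≥ b + 1, (λ̌_j)_{j∈N} vectors in a real inner product space, B ⊆ N with |B| ≤ b, and let C be the (b+1)-th largest element of the multiset of norms {‖λ̌_j‖ : j ∈ N} (sorted in nonincreasing order, with multiplicity). Let λ_i be a further vector (the agent's own dual variable), let U ⊆ N∪{i} with i ∈ U, and let (ẽ_j)_{j∈U} be nonnegative weights with w := Σ_{j∈U} ẽ_j > 0. Then the IOS(ARC) output satisfies ‖(1/w)·(ẽ_i·λ_i + Σ_{j∈U∖{i}} ẽ_j·clip_C(λ̌_j))‖ ≤ max over j' ∈ (N∖B)∪{i} of ‖λ̌_{j'}‖, where λ̌_i := λ_i. -/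

import Mathlib

/-- The clipping operator `clip_C(v) = min(1, C/‖v‖)·v` (with `clip_C(0) = 0`,
since in Lean `C/0 = 0`). -/
noncomputable def clip {E : Type*} [NormedAddCommGroup E] [InnerProductSpace ℝ E]
    (C : ℝ) (v : E) : E := min 1 (C / ‖v‖) • v

/-!
The output is the center of mass, with weights `e`, of `λ_i` and the clipped vectors
`clip_C(λ̌_j)`, so it suffices that each of these lies in the closed ball of radius
`M := max_{j ∈ (N \ B) ∪ {i}} ‖λ̌_j‖`. For `λ_i` and for benign `j` this is clear, since
clipping does not increase norms. For `j ∈ B` we use `‖clip_C(λ̌_j)‖ ≤ C`: at least `b + 1`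
indices of `N` have norm `≥ C`, so one of them is benign, whence `C ≤ M`.
-/

section Clip

variable {E : Type*} [NormedAddCommGroup E] [InnerProductSpace ℝ E]

lemma norm_clip {C : ℝ} (hC : 0 ≤ C) (v : E) : ‖clip C v‖ = min ‖v‖ C := by
  unfold clip
  rcases eq_or_ne v 0 with rfl | hv
  · simp [hC]
  · have h : 0 < ‖v‖ := norm_pos_iff.mpr hv
    rw [norm_smul, Real.norm_eq_abs,
      abs_of_nonneg (le_min zero_le_one (div_nonneg hC h.le)),
      min_mul_of_nonneg _ _ h.le, one_mul, div_mul_cancel₀ _ h.ne']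

lemma norm_clip_le {C M : ℝ} (hC : 0 ≤ C) {v : E} (h : ‖v‖ ≤ M ∨ C ≤ M) :
    ‖clip C v‖ ≤ M := by
  rw [norm_clip hC]
  exact min_le_iff.2 h

end Clip

section OrderStatistic

variable {α : Type*} [LinearOrder α]

lemma List.Pairwise.length_sub_le_countP_getElem_le {l : List α}
    (hl : l.Pairwise (· ≤ ·)) {k : ℕ} (hk : k < l.length) :
    l.length - k ≤ l.countP (fun x => l[k] ≤ x) := by
  have hdrop : ∀ x ∈ l.drop k, l[k] ≤ x := by
    intro x hx
    obtain ⟨m, hm, rfl⟩ := List.mem_drop_iff_getElem.1 hx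
    exact hl.rel_get_of_le (a := ⟨k, hk⟩) (b := ⟨k + m, by omega⟩) (by simp)
  refine le_trans ?_ (List.drop_sublist k l).countP_le
  rw [List.countP_eq_length.2 (by simpa using hdrop), List.length_drop]

lemma Multiset.getD_sort_mem (s : Multiset α) {k : ℕ} (hk : k < s.card) (d : α) :
    (s.sort (· ≤ ·)).getD k d ∈ s := by
  rw [List.getD_eq_getElem _ _ (by rwa [Multiset.length_sort]), ← Multiset.mem_sort (· ≤ ·)]
  exact List.getElem_mem _

lemma Multiset.card_sub_le_countP_getD_sort_le (s : Multiset α) {k : ℕ} (hk : k < s.card)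
    (d : α) : s.card - k ≤ s.countP (fun x => (s.sort (· ≤ ·)).getD k d ≤ x) := by
  have hk' : k < (s.sort (· ≤ ·)).length := by rwa [Multiset.length_sort]
  have hsorted := (Multiset.pairwise_sort s (· ≤ ·)).length_sub_le_countP_getElem_le hk'
  have hcoe := Multiset.coe_countP (fun x => (s.sort (· ≤ ·)).getD k d ≤ x) (s.sort (· ≤ ·))
  rw [Multiset.sort_eq] at hcoe
  rw [hcoe, List.getD_eq_getElem _ _ hk']
  simpa only [Multiset.length_sort] using hsorted

/-- `((N.val.map f).sort (· ≤ ·)).getD (N.card - 1 - b) d` is the `(b + 1)`-th largest value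
of `f` on `N`. -/
lemma Finset.exists_mem_sdiff_getD_sort_le {ι : Type*} [DecidableEq ι] (N B : Finset ι)
    (f : ι → α) {b : ℕ} (hNb : b + 1 ≤ N.card) (hB : B.card ≤ b) (d : α) :
    ∃ j ∈ N \ B, ((N.val.map f).sort (· ≤ ·)).getD (N.card - 1 - b) d ≤ f j := by
  set C := ((N.val.map f).sort (· ≤ ·)).getD (N.card - 1 - b) d
  have hcount : b + 1 ≤ (N.filter fun j => C ≤ f j).card := by
    have hsorted := (N.val.map f).card_sub_le_countP_getD_sort_le
      (k := N.card - 1 - b) (by rw [Multiset.card_map, Finset.card_val]; omega) d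
    rw [Multiset.countP_map, Multiset.card_map] at hsorted
    exact (by omega : b + 1 ≤ N.card - (N.card - 1 - b)).trans hsorted
  obtain ⟨j, hjC, hjB⟩ := Finset.not_subset.1 fun h : (N.filter fun j => C ≤ f j) ⊆ B =>
    absurd (Finset.card_le_card h) (by omega)
  obtain ⟨hjN, hCj⟩ := Finset.mem_filter.1 hjC
  exact ⟨j, Finset.mem_sdiff.2 ⟨hjN, hjB⟩, hCj⟩

end OrderStatistic

section CenterMass

variable {E ι : Type*}

lemma Finset.inv_smul_add_sum_sdiff_eq_centerMass_update {R : Type*} [Field R] [AddCommGroup E]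
    [Module R E] [DecidableEq ι] {U : Finset ι} {i : ι} (hi : i ∈ U) (e : ι → R) (x : E)
    (z : ι → E) :
    (∑ j ∈ U, e j)⁻¹ • (e i • x + ∑ j ∈ U \ {i}, e j • z j)
      = U.centerMass e (Function.update z i x) := by
  rw [Finset.centerMass, Finset.sum_eq_add_sum_sdiff_singleton_of_mem hi
    (fun j => e j • Function.update z i x j), Function.update_self]
  congr 2
  refine Finset.sum_congr rfl fun j hj => ?_
  rw [Function.update_of_ne (by simpa using (Finset.mem_sdiff.1 hj).2 : j ≠ i)]

lemma Finset.norm_centerMass_le [NormedAddCommGroup E] [NormedSpace ℝ E] {U : Finset ι}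
    {e : ι → ℝ} {z : ι → E} {M : ℝ} (he : ∀ j ∈ U, 0 ≤ e j) (hpos : 0 < ∑ j ∈ U, e j)
    (hz : ∀ j ∈ U, ‖z j‖ ≤ M) : ‖U.centerMass e z‖ ≤ M := by
  simpa using (convex_closedBall (0 : E) M).centerMass_mem he hpos fun j hj => by
    simpa using hz j hj

end CenterMass

theorem ios_arc_norm_bound_general
    {E : Type*} [NormedAddCommGroup E] [InnerProductSpace ℝ E]
    {ι : Type*} [DecidableEq ι]
    (N : Finset ι) (b : ℕ) (hNb : b + 1 ≤ N.card)
    (lamc : ι → E)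
    (B : Finset ι) (hB : B.card ≤ b)
    (C : ℝ)
    (hC : C = ((N.val.map fun j => ‖lamc j‖).sort (· ≤ ·)).getD
        (N.card - 1 - b) 0)
    (i : ι)
    (U : Finset ι) (hU : U ⊆ insert i N) (hiU : i ∈ U)
    (e : ι → ℝ) (he : ∀ j ∈ U, 0 ≤ e j)
    (w : ℝ) (hw : w = ∑ j ∈ U, e j) (hwpos : 0 < w) :
    ‖w⁻¹ • (e i • lamc i + ∑ j ∈ U \ {i}, e j • clip C (lamc j))‖
      ≤ sSup ((fun j' => ‖lamc j'‖) '' ((insert i (N \ B) : Finset ι) : Set ι)) := by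
  set M := sSup ((fun j' => ‖lamc j'‖) '' ((insert i (N \ B) : Finset ι) : Set ι))
  have hle : ∀ j ∈ insert i (N \ B), ‖lamc j‖ ≤ M := fun j hj =>
    le_csSup ((Set.toFinite _).image _).bddAbove ⟨j, hj, rfl⟩
  have hC0 : 0 ≤ C := by
    obtain ⟨j, -, hj⟩ := Multiset.mem_map.1
      (hC ▸ Multiset.getD_sort_mem _ (by rw [Multiset.card_map, Finset.card_val]; omega) 0)
    exact hj ▸ norm_nonneg _
  obtain ⟨j₀, hj₀, hCj₀⟩ := N.exists_mem_sdiff_getD_sort_le B (‖lamc ·‖) hNb hB 0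
  have hCM : C ≤ M := hC ▸ hCj₀.trans (hle j₀ (Finset.mem_insert_of_mem hj₀))
  rw [hw, Finset.inv_smul_add_sum_sdiff_eq_centerMass_update hiU]
  refine Finset.norm_centerMass_le he (hw ▸ hwpos) fun j hj => ?_
  by_cases hji : j = i
  · subst hji
    simpa using hle j (Finset.mem_insert_self _ _)
  have hjN : j ∈ N := (Finset.mem_insert.1 (hU hj)).resolve_left hji
  rw [Function.update_of_ne hji]
  by_cases hjB : j ∈ B
  · exact norm_clip_le hC0 (Or.inr hCM)
  · exact norm_clip_le hC0 (Or.inl (hle j (by simp [hjN, hjB])))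

/-- **The iterative outlier scissor rule IOS composed with adaptive robust
clipping ARC satisfies the norm condition (Property 2):** the output norm is
bounded by the maximal norm among the agent's own dual variable `lamc i` and
the benign neighbors' dual variables. -/
theorem ios_arc_norm_bound
    {E : Type*} [NormedAddCommGroup E] [InnerProductSpace ℝ E]
    {ι : Type*} [DecidableEq ι]
    (N : Finset ι) (b : ℕ) (hNb : b + 1 ≤ N.card)
    (lamc : ι → E)
    (B : Finset ι) (hBN : B ⊆ N) (hB : B.card ≤ b)
    (C : ℝ)
    (hC : C = ((N.val.map fun j => ‖lamc j‖).sort (· ≤ ·)).getD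
        (N.card - 1 - b) 0)
    (i : ι) (hi : i ∉ N)
    (U : Finset ι) (hU : U ⊆ insert i N) (hiU : i ∈ U)
    (e : ι → ℝ) (he : ∀ j ∈ U, 0 ≤ e j)
    (w : ℝ) (hw : w = ∑ j ∈ U, e j) (hwpos : 0 < w) :
    ‖w⁻¹ • (e i • lamc i + ∑ j ∈ U \ {i}, e j • clip C (lamc j))‖
      ≤ sSup ((fun j' => ‖lamc j'‖) '' ((insert i (N \ B) : Finset ι) : Set ι)) :=
  ios_arc_norm_bound_general N b hNb lamc B hB C hC i U hU hiU e he w hw hwpos
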